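/- Under Assumption (A) with h, σ ∈ C²(Ω̄) (conditions (i)–(iv) and the uniform bound (v) for |α| = 2), the maximizers satisfy |c_n − c| = O(n^{-p}) as n → ∞. -/

import Mathlib

/-! Since `h_n → h` uniformly on the compact set `Ω̄` and `c` is the strict maximizer of `h`,
the maximizers `c_n` converge to `c`. Both are critical points, so
`∇h(c_n) - ∇h(c) = -ε_n ∇σ(c_n) = O(ε_n)`. As `D²h(c)` is invertible,
`∇h(x) - ∇h(c) ≍ x - c` near `c`, whence `|c_n - c| = O(|∇h(c_n) - ∇h(c)|) = O(ε_n) = O(n^{-p})`. -/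

open Filter Asymptotics

noncomputable def pd {d : ℕ} (i : Fin d) (f : (Fin d → ℝ) → ℝ) : (Fin d → ℝ) → ℝ :=
  fun x => fderiv ℝ f x (Pi.single i 1)

noncomputable def hess {d : ℕ} (f : (Fin d → ℝ) → ℝ) (x : Fin d → ℝ) :
    Matrix (Fin d) (Fin d) ℝ := Matrix.of fun i j => pd i (pd j f) x

open Topology Set Matrix

theorem isMaxOn_of_forall_ne_lt {α β : Type*} [Preorder β] {f : α → β} {s : Set α} {a : α}
    (h : ∀ x ∈ s, x ≠ a → f x < f a) : IsMaxOn f s a := fun x hx => by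
  rcases eq_or_ne x a with rfl | hne
  exacts [le_rfl, (h x hx hne).le]

theorem tendsto_of_isMaxOn_of_tendstoUniformlyOn {X ι : Type*} [TopologicalSpace X]
    {l : Filter ι} {K : Set X} {f : X → ℝ} {c : X} (hK : IsCompact K) (hf : ContinuousOn f K)
    (hc : c ∈ K) (hmax : ∀ x ∈ K, x ≠ c → f x < f c) {g : ι → X → ℝ}
    (hg : TendstoUniformlyOn g f l K) {x : ι → X} (hxK : ∀ i, x i ∈ K)
    (hxmax : ∀ i, IsMaxOn (g i) K (x i)) : Tendsto x l (𝓝 c) := by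
  refine (nhds_basis_opens c).tendsto_right_iff.2 fun U ⟨hcU, hUo⟩ => ?_
  rcases (K \ U).eq_empty_or_nonempty with hKU | hKU
  · exact Eventually.of_forall fun i => by_contra fun hxU => hKU.subset ⟨hxK i, hxU⟩
  obtain ⟨y, hyKU, hymax⟩ := (hK.diff hUo).exists_isMaxOn hKU (hf.mono sdiff_subset)
  have hgap : 0 < f c - f y := sub_pos.2 (hmax y hyKU.1 fun hyc => hyKU.2 (hyc ▸ hcU))
  filter_upwards [Metric.tendstoUniformlyOn_iff.1 hg _ (half_pos hgap)] with i hi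
  by_contra hxU
  have hfx : f (x i) ≤ f y := hymax ⟨hxK i, hxU⟩
  have hgx := hi (x i) (hxK i)
  have hgc := hi c hc
  have hgmax : g i c ≤ g i (x i) := hxmax i hc
  rw [Real.dist_eq, abs_lt] at hgx hgc
  linarith

theorem tendstoUniformlyOn_add_mul {X ι : Type*} {l : Filter ι} {K : Set X} (f : X → ℝ)
    {σ : X → ℝ} {S : ℝ} (hσ : ∀ x ∈ K, ‖σ x‖ ≤ S) {ε : ι → ℝ} (hε : Tendsto ε l (𝓝 0)) :
    TendstoUniformlyOn (fun i x => f x + ε i * σ x) f l K := by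
  rw [Metric.tendstoUniformlyOn_iff]
  intro δ hδ
  have hsmall : Tendsto (fun i => |ε i| * (|S| + 1)) l (𝓝 0) := by
    simpa using hε.abs.mul_const (|S| + 1)
  filter_upwards [hsmall.eventually (gt_mem_nhds hδ)] with i hi x hx
  calc dist (f x) (f x + ε i * σ x) = |ε i| * ‖σ x‖ := by
        rw [Real.dist_eq, sub_add_cancel_left, abs_neg, abs_mul, Real.norm_eq_abs]
    _ ≤ |ε i| * (|S| + 1) := by gcongr; linarith [hσ x hx, le_abs_self S]
    _ < δ := hi

theorem fderiv_eq_neg_smul_of_isLocalMax_add_mul {E : Type*} [NormedAddCommGroup E]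
    [NormedSpace ℝ E] {f σ : E → ℝ} {a : ℝ} {x : E}
    (hmax : IsLocalMax (fun y => f y + a * σ y) x) (hf : DifferentiableAt ℝ f x)
    (hσ : DifferentiableAt ℝ σ x) : fderiv ℝ f x = -a • fderiv ℝ σ x := by
  have hcrit := hmax.fderiv_eq_zero
  rw [fderiv_fun_add hf (hσ.const_mul a), fderiv_const_mul hσ] at hcrit
  rw [neg_smul, eq_neg_iff_add_eq_zero, hcrit]

section Hessian

variable {d : ℕ} {f : (Fin d → ℝ) → ℝ} {x : Fin d → ℝ}

theorem hess_apply_eq_fderiv_fderiv (hf : DifferentiableAt ℝ (fderiv ℝ f) x) (i j : Fin d) :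
    hess f x i j = fderiv ℝ (fderiv ℝ f) x (Pi.single i 1) (Pi.single j 1) := by
  change fderiv ℝ (fun y => fderiv ℝ f y (Pi.single j 1)) x (Pi.single i 1) = _
  simp [fderiv_clm_apply hf (differentiableAt_const _)]

theorem injective_fderiv_fderiv_of_det_hess_ne_zero (hf : DifferentiableAt ℝ (fderiv ℝ f) x)
    (hdet : (hess f x).det ≠ 0) : Function.Injective (fderiv ℝ (fderiv ℝ f) x) := by
  refine (injective_iff_map_eq_zero _).2 fun v hv => Matrix.eq_zero_of_vecMul_eq_zero hdet ?_
  ext j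
  calc (v ᵥ* hess f x) j
      = fderiv ℝ (fderiv ℝ f) x (∑ i, v i • Pi.single i 1) (Pi.single j 1) := by
        simp [Matrix.vecMul, dotProduct, hess_apply_eq_fderiv_fderiv hf, map_sum]
    _ = 0 := by rw [← pi_eq_sum_univ' v, hv]; rfl

theorem isBigO_sub_fderiv_of_det_hess_ne_zero (hf : DifferentiableAt ℝ (fderiv ℝ f) x)
    (hdet : (hess f x).det ≠ 0) :
    (· - x) =O[𝓝 x] (fderiv ℝ f · - fderiv ℝ f x) :=
  (hf.hasFDerivAt.isTheta_sub (LinearMap.isClosedEmbedding_of_injective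
    (LinearMap.ker_eq_bot.2 (injective_fderiv_fderiv_of_det_hess_ne_zero hf hdet))).isInducing
    ).isBigO_symm

end Hessian

theorem stmt_2_general (d : ℕ) (Ω : Set (Fin d → ℝ)) (hΩo : IsOpen Ω)
    (hΩb : Bornology.IsBounded Ω)
    (h σ : (Fin d → ℝ) → ℝ)
    (hh : ContDiffOn ℝ 2 h (closure Ω)) (hσ : ContDiffOn ℝ 2 σ (closure Ω))
    (p : ℝ) (hp : 1 < p) (ε : ℕ → ℝ)
    (hε : ε =O[atTop] fun n : ℕ => (n : ℝ) ^ (-p))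
    (hn : ℕ → (Fin d → ℝ) → ℝ) (hhn : ∀ n x, hn n x = h x + ε n * σ x)
    (c : Fin d → ℝ) (hc : c ∈ Ω) (hmax : ∀ x ∈ closure Ω, x ≠ c → h x < h c)
    (hdet : (hess h c).det ≠ 0)
    (cn : ℕ → Fin d → ℝ) (hcnΩ : ∀ n, cn n ∈ Ω)
    (hmaxn : ∀ n, ∀ x ∈ closure Ω, x ≠ cn n → hn n x < hn n (cn n)) :
    (fun n : ℕ => ‖cn n - c‖) =O[atTop] fun n : ℕ => (n : ℝ) ^ (-p) := by
  obtain rfl : hn = fun n x => h x + ε n * σ x := funext₂ hhn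
  have hnhds : ∀ x ∈ Ω, closure Ω ∈ 𝓝 x := fun x hx =>
    mem_of_superset (hΩo.mem_nhds hx) subset_closure
  have hε0 : Tendsto ε atTop (𝓝 0) := hε.trans_tendsto
    ((tendsto_rpow_neg_atTop (by linarith)).comp tendsto_natCast_atTop_atTop)
  obtain ⟨S, hS⟩ := hΩb.isCompact_closure.exists_bound_of_continuousOn hσ.continuousOn
  have hlim : Tendsto cn atTop (𝓝 c) :=
    tendsto_of_isMaxOn_of_tendstoUniformlyOn hΩb.isCompact_closure hh.continuousOn
      (subset_closure hc) hmax (tendstoUniformlyOn_add_mul h hS hε0)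
      (fun n => subset_closure (hcnΩ n)) fun n => isMaxOn_of_forall_ne_lt (hmaxn n)
  have hcrit : fderiv ℝ h c = 0 :=
    ((isMaxOn_of_forall_ne_lt hmax).isLocalMax (hnhds c hc)).fderiv_eq_zero
  have hcritn : ∀ n, fderiv ℝ h (cn n) = -ε n • fderiv ℝ σ (cn n) := fun n =>
    fderiv_eq_neg_smul_of_isLocalMax_add_mul
      ((isMaxOn_of_forall_ne_lt (hmaxn n)).isLocalMax (hnhds _ (hcnΩ n)))
      ((hh.contDiffAt (hnhds _ (hcnΩ n))).differentiableAt two_ne_zero)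
      ((hσ.contDiffAt (hnhds _ (hcnΩ n))).differentiableAt two_ne_zero)
  have hσbdd : (fun n => fderiv ℝ σ (cn n)) =O[atTop] fun _ => (1 : ℝ) :=
    (((hσ.contDiffAt (hnhds c hc)).continuousAt_fderiv two_ne_zero).tendsto.comp hlim).isBigO_one ℝ
  have hdist := (isBigO_sub_fderiv_of_det_hess_ne_zero
    (((hh.contDiffAt (hnhds c hc)).fderiv_right le_rfl).differentiableAt one_ne_zero)
    hdet).comp_tendsto hlim
  simp only [Function.comp_def, hcrit, sub_zero, hcritn] at hdist
  simpa using hdist.norm_left.trans ((isBigO_neg_left.2 hε).smul hσbdd)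

theorem stmt_2 (d : ℕ) (Ω : Set (Fin d → ℝ)) (hΩo : IsOpen Ω)
    (hΩb : Bornology.IsBounded Ω) (hΩc : IsConnected Ω)
    (h σ : (Fin d → ℝ) → ℝ)
    (hh : ContDiffOn ℝ 2 h (closure Ω)) (hσ : ContDiffOn ℝ 2 σ (closure Ω))
    (p : ℝ) (hp : 1 < p) (ε : ℕ → ℝ) (hεpos : ∀ n, 0 < ε n)
    (hε : ε =O[atTop] fun n : ℕ => (n : ℝ) ^ (-p))
    (hn : ℕ → (Fin d → ℝ) → ℝ) (hhn : ∀ n x, hn n x = h x + ε n * σ x)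
    (c : Fin d → ℝ) (hc : c ∈ Ω) (hmax : ∀ x ∈ closure Ω, x ≠ c → h x < h c)
    (hdet : (hess h c).det ≠ 0)
    (cn : ℕ → Fin d → ℝ) (hcnΩ : ∀ n, cn n ∈ Ω)
    (hmaxn : ∀ n, ∀ x ∈ closure Ω, x ≠ cn n → hn n x < hn n (cn n))
    (hdetn : ∀ n, (hess (hn n) (cn n)).det ≠ 0)
    (hinf : ∃ N₀ : ℕ, ∃ C > (0 : ℝ), ∀ n ≥ N₀, ∀ x ∈ closure Ω, C ≤ |(hess (hn n) x).det|)
    (hsup : ∃ N₁ : ℕ, ∃ M : ℝ, ∀ n ≥ N₁, ∀ x ∈ closure Ω, ∀ i j, |hess (hn n) x i j| ≤ M) :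
    (fun n : ℕ => ‖cn n - c‖) =O[atTop] fun n : ℕ => (n : ℝ) ^ (-p) :=
  stmt_2_general d Ω hΩo hΩb h σ hh hσ p hp ε hε hn hhn c hc hmax hdet cn hcnΩ hmaxn
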